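/- arXiv:math-ph/0108003 — 2 statements merged into one kernel-verified Lean document; each statement's English description precedes it below -/
import Mathlib

section
/- For q > 1 there exist positive constants C₁, C₂, C₃, k (depending only on q) such that for all sufficiently small t > 0, C₁ t^{-1/2}(exp(k/t) - C₃) < ∑_{m=1}^{∞} ([m]_q)^2 exp(-t((m+1)/2)^2) < C₂ t^{-1/2} exp(k/t). -/
open Real Filter Set

/-- The q-number [x]_q = (q^x - q^{-x})/(q - q⁻¹). -/
noncomputable def qnum (q x : ℝ) : ℝ := (q ^ x - q ^ (-x)) / (q - q⁻¹)

/-!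
For `x ≥ 1` one has `q ^ (x - 1) ≤ [x]_q ≤ q ^ x / (q - q⁻¹)`, so up to constants the
`m`-th term is `q ^ (2m) e^{-t (m + 2)² / 4}`. Completing the square turns this into
`e^{k/t - 4 log q}` times the Gaussian `e^{-c (m - s)²}` with `c = t / 4`, centre
`s = 4 log q / t - 2` and `k = 4 (log q)²`. A Gaussian summed over `ℕ` is of order `c^{-1/2}`:
from below, the `⌊c^{-1/2}⌋` terms just right of the centre are each at least `e⁻¹`; from
above, reflecting at the centre bounds it by `2 ∑ e^{-c n²}`, and
`e^{-c n²} ≤ e^{1/4} e^{-√c n}` bounds that by a geometric series.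
-/

section Gaussian

variable {c : ℝ}

lemma exp_neg_mul_sq_le_of_le (hc : 0 ≤ c) {a b : ℝ} (ha : 0 ≤ a) (hab : a ≤ b) :
    exp (-c * b ^ 2) ≤ exp (-c * a ^ 2) := by
  have := mul_le_mul_of_nonneg_left (pow_le_pow_left₀ ha hab 2) hc
  exact exp_le_exp.2 (by linarith)

lemma exp_neg_mul_sq_le (hc : 0 ≤ c) (x : ℝ) :
    exp (-c * x ^ 2) ≤ exp (1 / 4) * exp (-(√c * x)) := by
  rw [← exp_add]
  have := sq_nonneg (√c * x - 1 / 2)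
  have := sq_sqrt hc
  exact exp_le_exp.2 (by nlinarith)

lemma inv_one_sub_exp_neg_le {x : ℝ} (hx : 0 < x) : (1 - exp (-x))⁻¹ ≤ 1 + x⁻¹ := by
  have h : x / (1 + x) ≤ 1 - exp (-x) := by
    have := add_one_le_exp x
    rw [exp_neg, div_le_iff₀ (by linarith)]
    field_simp
    nlinarith [exp_pos x]
  calc (1 - exp (-x))⁻¹ ≤ (x / (1 + x))⁻¹ := inv_anti₀ (by positivity) h
    _ = 1 + x⁻¹ := by field_simp; ring

lemma summable_exp_neg_mul_sub_sq (hc : 0 < c) (s : ℝ) :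
    Summable fun n : ℕ => exp (-c * (n - s) ^ 2) := by
  have hr : exp (-√c) < 1 := exp_lt_one_iff.2 (neg_neg_of_pos (sqrt_pos.2 hc))
  refine .of_nonneg_of_le (fun _ => (exp_pos _).le) (fun n => ?_)
    ((summable_geometric_of_lt_one (exp_pos _).le hr).mul_left (exp (1 / 4) * exp (√c * s)))
  calc exp (-c * (n - s) ^ 2) ≤ exp (1 / 4) * exp (-(√c * (n - s))) := exp_neg_mul_sq_le hc.le _
    _ = exp (1 / 4) * exp (√c * s) * exp (-√c) ^ n := by
      rw [← exp_nat_mul, ← exp_add, ← exp_add, ← exp_add]; ring_nf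

lemma tsum_exp_neg_mul_sq_le (hc : 0 < c) :
    ∑' n : ℕ, exp (-c * n ^ 2) ≤ exp (1 / 4) * (1 + (√c)⁻¹) := by
  have hr : exp (-√c) < 1 := exp_lt_one_iff.2 (neg_neg_of_pos (sqrt_pos.2 hc))
  have hgeom := summable_geometric_of_lt_one (exp_pos _).le hr
  calc ∑' n : ℕ, exp (-c * n ^ 2) ≤ ∑' n : ℕ, exp (1 / 4) * exp (-√c) ^ n := by
        refine Summable.tsum_le_tsum (fun n => ?_) (by simpa using summable_exp_neg_mul_sub_sq hc 0)
          (hgeom.mul_left _)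
        rw [← exp_nat_mul, mul_neg, mul_comm (n : ℝ)]
        exact exp_neg_mul_sq_le hc.le _
    _ = exp (1 / 4) * (1 - exp (-√c))⁻¹ := by
        rw [tsum_mul_left, tsum_geometric_of_lt_one (exp_pos _).le hr]
    _ ≤ exp (1 / 4) * (1 + (√c)⁻¹) := by gcongr; exact inv_one_sub_exp_neg_le (sqrt_pos.2 hc)

lemma tsum_exp_neg_mul_sub_sq_le (hc : 0 < c) (s : ℝ) :
    ∑' n : ℕ, exp (-c * (n - s) ^ 2) ≤ 2 * ∑' n : ℕ, exp (-c * n ^ 2) := by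
  set N := ⌈s⌉₊
  have hf := summable_exp_neg_mul_sub_sq hc s
  have hg : Summable fun n : ℕ => exp (-c * n ^ 2) := by
    simpa using summable_exp_neg_mul_sub_sq hc 0
  rw [← hf.sum_add_tsum_nat_add N, two_mul]
  gcongr ?_ + ?_
  · calc ∑ n ∈ Finset.range N, exp (-c * (n - s) ^ 2)
        ≤ ∑ n ∈ Finset.range N, exp (-c * ((N - 1 - n : ℕ) : ℝ) ^ 2) := by
          refine Finset.sum_le_sum fun n hn => ?_
          have hnN := Finset.mem_range.1 hn
          have hN : (N : ℝ) < s + 1 := Nat.ceil_lt_add_one (Nat.ceil_pos.1 (by omega)).le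
          rw [← neg_sq, neg_sub]
          refine exp_neg_mul_sq_le_of_le hc.le (Nat.cast_nonneg _) ?_
          rw [Nat.cast_sub (by omega), Nat.cast_sub (by omega)]
          push_cast
          linarith
      _ = ∑ n ∈ Finset.range N, exp (-c * (n : ℝ) ^ 2) :=
          Finset.sum_range_reflect (fun n : ℕ => exp (-c * (n : ℝ) ^ 2)) N
      _ ≤ ∑' n : ℕ, exp (-c * n ^ 2) := hg.sum_le_tsum _ fun _ _ => (exp_pos _).le
  · refine Summable.tsum_le_tsum (fun n => ?_) (hf.comp_injective (add_left_injective N)) hg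
    have hN : s ≤ N := Nat.le_ceil s
    refine exp_neg_mul_sq_le_of_le hc.le (Nat.cast_nonneg _) ?_
    push_cast
    linarith

lemma le_tsum_exp_neg_mul_sub_sq (hc : 0 < c) {s : ℝ} (hs : 0 ≤ s) :
    exp (-1) * ((√c)⁻¹ - 1) ≤ ∑' n : ℕ, exp (-c * (n - s) ^ 2) := by
  set N := ⌈s⌉₊
  set K := ⌊(√c)⁻¹⌋₊
  have hterm : ∀ n ∈ Finset.Ico N (N + K), exp (-1) ≤ exp (-c * (n - s) ^ 2) := by
    intro n hn
    obtain ⟨hNn, hnK⟩ := Finset.mem_Ico.1 hn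
    have hNn' : (N : ℝ) ≤ n := by exact_mod_cast hNn
    have hnK' : (n : ℝ) + 1 ≤ N + K := by exact_mod_cast hnK
    have hsN : s ≤ N := Nat.le_ceil s
    have hNs : (N : ℝ) < s + 1 := Nat.ceil_lt_add_one hs
    have hK : (K : ℝ) ≤ (√c)⁻¹ := Nat.floor_le (by positivity)
    have h0 : 0 ≤ (n : ℝ) - s := by linarith
    have h1 : c * (n - s) ^ 2 ≤ 1 := calc
      c * (n - s) ^ 2 ≤ c * ((√c)⁻¹) ^ 2 := by gcongr; linarith
      _ = 1 := by rw [inv_pow, sq_sqrt hc.le, mul_inv_cancel₀ hc.ne']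
    exact exp_le_exp.2 (by linarith)
  calc exp (-1) * ((√c)⁻¹ - 1) ≤ exp (-1) * K := by gcongr; exact (Nat.sub_one_lt_floor _).le
    _ = ∑ n ∈ Finset.Ico N (N + K), exp (-1) := by simp [mul_comm]
    _ ≤ ∑ n ∈ Finset.Ico N (N + K), exp (-c * (n - s) ^ 2) := Finset.sum_le_sum hterm
    _ ≤ ∑' n : ℕ, exp (-c * (n - s) ^ 2) :=
      (summable_exp_neg_mul_sub_sq hc s).sum_le_tsum _ fun _ _ => (exp_pos _).le

end Gaussian

section QNumber

variable {q : ℝ}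

lemma rpow_sub_one_le_qnum (hq : 1 < q) {x : ℝ} (hx : 1 ≤ x) : q ^ (x - 1) ≤ qnum q x := by
  have hq0 : 0 < q := by linarith
  rw [qnum, le_div_iff₀ (by linarith [inv_lt_one_of_one_lt₀ hq]), mul_sub,
    ← rpow_add_one hq0.ne', ← rpow_neg_one, ← rpow_add hq0]
  have : q ^ (-x) ≤ q ^ (x - 1 + -1) := rpow_le_rpow_of_exponent_le hq.le (by linarith)
  ring_nf at this ⊢
  linarith

lemma qnum_le (hq : 1 < q) (x : ℝ) : qnum q x ≤ q ^ x / (q - q⁻¹) := by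
  have := rpow_pos_of_pos (zero_lt_one.trans hq) (-x)
  rw [qnum]
  gcongr
  · linarith [inv_lt_one_of_one_lt₀ hq]
  · linarith

lemma rpow_sq_mul_exp_neg_eq (hq : 0 < q) {t : ℝ} (ht : t ≠ 0) (x : ℝ) :
    (q ^ x) ^ 2 * exp (-t * ((x + 1 + 1) / 2) ^ 2) =
      exp (4 * log q ^ 2 / t - 4 * log q) * exp (-(t / 4) * (x - (4 * log q / t - 2)) ^ 2) := by
  rw [rpow_def_of_pos hq, ← exp_nat_mul, ← exp_add, ← exp_add]
  congr 1
  field_simp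
  ring

lemma qnum_sq_mul_exp_neg_bounds (hq : 1 < q) {t x : ℝ} (ht : 0 < t) (hx : 0 ≤ x) :
    exp (4 * log q ^ 2 / t - 4 * log q) * exp (-(t / 4) * (x - (4 * log q / t - 2)) ^ 2) ≤
        qnum q (x + 1) ^ 2 * exp (-t * ((x + 1 + 1) / 2) ^ 2) ∧
      qnum q (x + 1) ^ 2 * exp (-t * ((x + 1 + 1) / 2) ^ 2) ≤
        (q / (q - q⁻¹)) ^ 2 * (exp (4 * log q ^ 2 / t - 4 * log q) *
          exp (-(t / 4) * (x - (4 * log q / t - 2)) ^ 2)) := by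
  have hq0 : 0 < q := zero_lt_one.trans hq
  have hlower : q ^ x ≤ qnum q (x + 1) := by
    simpa using rpow_sub_one_le_qnum hq (x := x + 1) (by linarith)
  have hupper : qnum q (x + 1) ≤ q / (q - q⁻¹) * q ^ x := by
    rw [div_mul_eq_mul_div, mul_comm, ← rpow_add_one hq0.ne']
    exact qnum_le hq _
  have hpos := rpow_pos_of_pos hq0 x
  rw [← rpow_sq_mul_exp_neg_eq hq0 ht.ne' x, ← mul_assoc, ← mul_pow]
  constructor
  · gcongr
  · gcongr
    exact hpos.le.trans hlower

end QNumber

section Series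

variable {q t : ℝ}

lemma tsum_qnum_sq_mul_exp_neg_bounds (hq : 1 < q) (ht : 0 < t) :
    exp (4 * log q ^ 2 / t - 4 * log q) *
          ∑' n : ℕ, exp (-(t / 4) * (n - (4 * log q / t - 2)) ^ 2) ≤
        ∑' m : ℕ, qnum q ((m : ℝ) + 1) ^ 2 * exp (-t * (((m : ℝ) + 1 + 1) / 2) ^ 2) ∧
      ∑' m : ℕ, qnum q ((m : ℝ) + 1) ^ 2 * exp (-t * (((m : ℝ) + 1 + 1) / 2) ^ 2) ≤
        (q / (q - q⁻¹)) ^ 2 * (exp (4 * log q ^ 2 / t - 4 * log q) *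
          ∑' n : ℕ, exp (-(t / 4) * (n - (4 * log q / t - 2)) ^ 2)) := by
  have hbounds := fun m : ℕ => qnum_sq_mul_exp_neg_bounds hq ht (Nat.cast_nonneg (α := ℝ) m)
  have hgauss := (summable_exp_neg_mul_sub_sq (by positivity : 0 < t / 4)
    (4 * log q / t - 2)).mul_left (exp (4 * log q ^ 2 / t - 4 * log q))
  have hsum := (Summable.of_nonneg_of_le (fun m => by positivity) (fun m => (hbounds m).2)
    (hgauss.mul_left ((q / (q - q⁻¹)) ^ 2)))
  rw [← tsum_mul_left, ← tsum_mul_left]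
  exact ⟨hgauss.tsum_le_tsum (fun m => (hbounds m).1) hsum,
    hsum.tsum_le_tsum (fun m => (hbounds m).2) (hgauss.mul_left _)⟩

lemma inv_sqrt_div_four (ht : 0 ≤ t) : (√(t / 4))⁻¹ = 2 * t ^ (-(1 : ℝ) / 2) := by
  rw [sqrt_div ht, show (4 : ℝ) = 2 ^ 2 by norm_num, sqrt_sq zero_le_two, neg_div,
    rpow_neg ht, ← sqrt_eq_rpow, inv_div, div_eq_mul_inv]

lemma exp_mul_rpow_le_tsum (hq : 1 < q) (ht : 0 < t) (ht1 : t ≤ 1) (htq : t ≤ 2 * log q) :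
    exp (-4 * log q - 1) * t ^ (-(1 : ℝ) / 2) * exp (4 * log q ^ 2 / t) ≤
      ∑' m : ℕ, qnum q ((m : ℝ) + 1) ^ 2 * exp (-t * (((m : ℝ) + 1 + 1) / 2) ^ 2) := by
  set P := t ^ (-(1 : ℝ) / 2)
  have hP : 1 ≤ P := one_le_rpow_of_pos_of_le_one_of_nonpos ht ht1 (by norm_num)
  have hs : 0 ≤ 4 * log q / t - 2 := by rw [sub_nonneg, le_div_iff₀ ht]; linarith
  have hG := le_tsum_exp_neg_mul_sub_sq (by positivity : 0 < t / 4) hs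
  rw [inv_sqrt_div_four ht.le] at hG
  have hexp : exp (-4 * log q - 1) * exp (4 * log q ^ 2 / t) =
      exp (4 * log q ^ 2 / t - 4 * log q) * exp (-1) := by
    rw [← exp_add, ← exp_add]; ring_nf
  refine le_trans ?_ (tsum_qnum_sq_mul_exp_neg_bounds hq ht).1
  calc exp (-4 * log q - 1) * P * exp (4 * log q ^ 2 / t)
      = exp (4 * log q ^ 2 / t - 4 * log q) * (exp (-1) * P) := by linear_combination P * hexp
    _ ≤ exp (4 * log q ^ 2 / t - 4 * log q) * (exp (-1) * (2 * P - 1)) := by gcongr; linarith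
    _ ≤ _ := by gcongr

lemma tsum_le_exp_mul_rpow (hq : 1 < q) (ht : 0 < t) (ht1 : t ≤ 1) :
    ∑' m : ℕ, qnum q ((m : ℝ) + 1) ^ 2 * exp (-t * (((m : ℝ) + 1 + 1) / 2) ^ 2) ≤
      6 * (q / (q - q⁻¹)) ^ 2 * exp (1 / 4 - 4 * log q) * t ^ (-(1 : ℝ) / 2) *
        exp (4 * log q ^ 2 / t) := by
  set P := t ^ (-(1 : ℝ) / 2)
  have hP : 1 ≤ P := one_le_rpow_of_pos_of_le_one_of_nonpos ht ht1 (by norm_num)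
  have hc : 0 < t / 4 := by positivity
  have hG := (tsum_exp_neg_mul_sub_sq_le hc (4 * log q / t - 2)).trans
    (mul_le_mul_of_nonneg_left (tsum_exp_neg_mul_sq_le hc) zero_le_two)
  rw [inv_sqrt_div_four ht.le] at hG
  have hexp : exp (4 * log q ^ 2 / t - 4 * log q) * exp (1 / 4) =
      exp (1 / 4 - 4 * log q) * exp (4 * log q ^ 2 / t) := by
    rw [← exp_add, ← exp_add]; ring_nf
  refine (tsum_qnum_sq_mul_exp_neg_bounds hq ht).2.trans ?_
  calc (q / (q - q⁻¹)) ^ 2 * (exp (4 * log q ^ 2 / t - 4 * log q) *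
        ∑' n : ℕ, exp (-(t / 4) * (n - (4 * log q / t - 2)) ^ 2))
      ≤ (q / (q - q⁻¹)) ^ 2 * (exp (4 * log q ^ 2 / t - 4 * log q) *
        (2 * (exp (1 / 4) * (1 + 2 * P)))) := by gcongr
    _ ≤ (q / (q - q⁻¹)) ^ 2 * (exp (4 * log q ^ 2 / t - 4 * log q) *
        (2 * (exp (1 / 4) * (3 * P)))) := by gcongr; linarith
    _ = _ := by linear_combination 6 * (q / (q - q⁻¹)) ^ 2 * P * hexp

end Series

/-- For q > 1 there are positive constants C₁, C₂, C₃, k depending only on q such that for all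
sufficiently small t > 0,
C₁ t^{-1/2}(exp(k/t) - C₃) < ∑_{m=1}^∞ ([m]_q)² exp(-t((m+1)/2)²) < C₂ t^{-1/2} exp(k/t). -/
theorem stmt5 (q : ℝ) (hq : 1 < q) :
    ∃ C₁ C₂ C₃ k : ℝ, 0 < C₁ ∧ 0 < C₂ ∧ 0 < C₃ ∧ 0 < k ∧
      ∀ᶠ t in nhdsWithin (0 : ℝ) (Ioi 0),
        C₁ * t ^ (-(1 : ℝ) / 2) * (Real.exp (k / t) - C₃) <
          (∑' m : ℕ, (qnum q ((m : ℝ) + 1)) ^ 2 *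
            Real.exp (-t * ((((m : ℝ) + 1) + 1) / 2) ^ 2)) ∧
        (∑' m : ℕ, (qnum q ((m : ℝ) + 1)) ^ 2 *
            Real.exp (-t * ((((m : ℝ) + 1) + 1) / 2) ^ 2)) <
          C₂ * t ^ (-(1 : ℝ) / 2) * Real.exp (k / t) := by
  have hL : 0 < log q := log_pos hq
  have hB : 0 < q - q⁻¹ := by linarith [inv_lt_one_of_one_lt₀ hq]
  refine ⟨exp (-4 * log q - 1), 7 * (q / (q - q⁻¹)) ^ 2 * exp (1 / 4 - 4 * log q), 1,
    4 * log q ^ 2, by positivity, by positivity, one_pos, by positivity, ?_⟩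
  filter_upwards [Ioo_mem_nhdsGT (lt_min one_pos (by positivity : 0 < 2 * log q))] with t ht
  obtain ⟨ht, htmin⟩ := ht
  have ht1 : t ≤ 1 := htmin.le.trans (min_le_left _ _)
  have htq : t ≤ 2 * log q := htmin.le.trans (min_le_right _ _)
  constructor
  · have hC₁ : 0 < exp (-4 * log q - 1) * t ^ (-(1 : ℝ) / 2) := by positivity
    exact (mul_lt_mul_of_pos_left (sub_one_lt _) hC₁).trans_le
      (exp_mul_rpow_le_tsum hq ht ht1 htq)
  · have hC₂ : 0 < (q / (q - q⁻¹)) ^ 2 * exp (1 / 4 - 4 * log q) * t ^ (-(1 : ℝ) / 2) *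
        exp (4 * log q ^ 2 / t) := by positivity
    linarith [tsum_le_exp_mul_rpow hq ht ht1]
end

section
/- Let (v^n_{ij}) be a square-summable family of complex numbers indexed by half-integers n ≥ 0 and i, j ∈ {-n,...,n}, and let B(n₀,n,p;i₀,j₀,i,j) be real coefficients satisfying ∑_{p=|n-n₀|}^{n+n₀} B(n₀,n,p;i₀,j₀,i,j)² ≤ C² for all n,i,j (fixed n₀,i₀,j₀). Then ∑_{p,i,j} |∑_{n : |n-n₀| ≤ p ≤ n+n₀} v^n_{ij} B(n₀,n,p;i₀,j₀,i,j)(p-n)|² ≤ (2n₀+1)·n₀²·C² · ∑_{n,i,j} |v^n_{ij}|². -/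
/-!
Each coupled spin `p` receives contributions from at most `2n₀+1` spins `n`, each with
`|p - n| ≤ n₀`, so Cauchy–Schwarz bounds the `p`-th term by `(2n₀+1) n₀² ∑ₙ |v^n_{ij}|² B²`.
Summing over `p` and exchanging the order of summation, the `B²` sum over the `p` coupled to a
fixed `n` is at most `C²`.
-/

open Finset

/-- A discrete Schur test. -/
theorem tsum_le_mul_tsum_of_le_sum {α β γ : Type*} [DecidableEq α] [DecidableEq β]
    [DecidableEq γ] (S : β → Finset γ) (T : γ → Finset β) (hST : ∀ N P, N ∈ S P ↔ P ∈ T N)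
    (F : γ → β → α → ℝ) (hF : ∀ N P a, 0 ≤ F N P a) (g : β × α → ℝ)
    (hg : ∀ x, g x ≤ ∑ N ∈ S x.1, F N x.1 x.2) (f : γ × α → ℝ) (hf0 : ∀ y, 0 ≤ f y)
    (hf : Summable f) {c : ℝ} (hc : 0 ≤ c) (hT : ∀ N a, ∑ P ∈ T N, F N P a ≤ c * f (N, a)) :
    ∑' x, g x ≤ c * ∑' y, f y := by
  refine tsum_le_of_sum_le' (mul_nonneg hc (tsum_nonneg hf0)) fun s => ?_
  set Ps := s.image Prod.fst
  set A := s.image Prod.snd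
  calc ∑ x ∈ s, g x
      ≤ ∑ x ∈ s, ∑ N ∈ S x.1, F N x.1 x.2 := sum_le_sum fun x _ => hg x
    _ ≤ ∑ x ∈ Ps ×ˢ A, ∑ N ∈ S x.1, F N x.1 x.2 :=
        sum_le_sum_of_subset_of_nonneg subset_product fun x _ _ =>
          sum_nonneg fun N _ => hF N x.1 x.2
    _ = ∑ a ∈ A, ∑ N ∈ Ps.biUnion S, ∑ P ∈ (T N).filter (· ∈ Ps), F N P a := by
        rw [sum_product_right]
        refine sum_congr rfl fun a _ => sum_comm' fun P N => ?_
        simp only [mem_filter, mem_biUnion, ← hST]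
        exact ⟨fun h => ⟨⟨h.2, h.1⟩, P, h⟩, fun h => ⟨h.1.2, h.1.1⟩⟩
    _ ≤ ∑ a ∈ A, ∑ N ∈ Ps.biUnion S, c * f (N, a) := by
        gcongr with a _ N _
        exact (sum_le_sum_of_subset_of_nonneg (filter_subset _ _)
          fun P _ _ => hF N P a).trans (hT N a)
    _ = c * ∑ y ∈ Ps.biUnion S ×ˢ A, f y := by rw [sum_product_right, mul_sum]; simp only [mul_sum]
    _ ≤ c * ∑' y, f y := by gcongr; exact hf.sum_le_tsum _ fun y _ => hf0 y

theorem norm_sum_sq_le_card_mul_sum_sq {ι E : Type*} [SeminormedAddCommGroup E]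
    (s : Finset ι) (a : ι → E) : ‖∑ i ∈ s, a i‖ ^ 2 ≤ #s * ∑ i ∈ s, ‖a i‖ ^ 2 :=
  (pow_le_pow_left₀ (norm_nonneg _) (norm_sum_le _ _) 2).trans sq_sum_le_card_mul_sum_sq

theorem norm_sum_mul_mul_sq_le {ι : Type*} {s : Finset ι} {m L : ℝ} (hs : (#s : ℝ) ≤ m)
    (a : ι → ℂ) (b c : ι → ℝ) (hc : ∀ i ∈ s, |c i| ≤ L) :
    ‖∑ i ∈ s, a i * b i * c i‖ ^ 2 ≤ m * L ^ 2 * ∑ i ∈ s, ‖a i‖ ^ 2 * b i ^ 2 := by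
  have hterm : ∀ i ∈ s, ‖a i * b i * c i‖ ^ 2 ≤ L ^ 2 * (‖a i‖ ^ 2 * b i ^ 2) := fun i hi => by
    rw [norm_mul, norm_mul, Complex.norm_real, Complex.norm_real, Real.norm_eq_abs,
      Real.norm_eq_abs, mul_pow, mul_pow, sq_abs, mul_comm]
    gcongr
    exact hc i hi
  calc ‖∑ i ∈ s, a i * b i * c i‖ ^ 2
      ≤ #s * ∑ i ∈ s, ‖a i * b i * c i‖ ^ 2 := norm_sum_sq_le_card_mul_sum_sq _ _
    _ ≤ m * ∑ i ∈ s, L ^ 2 * (‖a i‖ ^ 2 * b i ^ 2) := by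
        gcongr with i hi
        · exact (Nat.cast_nonneg _).trans hs
        · exact hterm i hi
    _ = m * L ^ 2 * ∑ i ∈ s, ‖a i‖ ^ 2 * b i ^ 2 := by rw [← mul_sum, mul_assoc]

/-- Spins are doubled: `P ∈ spinCouplings N₀ N` iff the spin `P/2` occurs in `N₀/2 ⊗ N/2`. -/
def spinCouplings (N₀ N : ℕ) : Finset ℕ :=
  (range (N + N₀ + 1)).filter fun P =>
    |(N : ℤ) - (N₀ : ℤ)| ≤ (P : ℤ) ∧ (P : ℤ) ≤ (N : ℤ) + (N₀ : ℤ) ∧ (N + P + N₀) % 2 = 0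

def spinSources (N₀ P : ℕ) : Finset ℕ :=
  (range (P + N₀ + 1)).filter fun N =>
    |(N : ℤ) - (N₀ : ℤ)| ≤ (P : ℤ) ∧ (P : ℤ) ≤ (N : ℤ) + (N₀ : ℤ) ∧ (N + P + N₀) % 2 = 0

theorem mem_spinSources_iff_mem_spinCouplings {N₀ N P : ℕ} :
    N ∈ spinSources N₀ P ↔ P ∈ spinCouplings N₀ N := by
  simp only [spinSources, spinCouplings, mem_filter, mem_range, abs_le]
  omega

theorem abs_sub_le_of_mem_spinSources {N₀ N P : ℕ} (h : N ∈ spinSources N₀ P) :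
    |((P : ℝ) - N) / 2| ≤ (N₀ : ℝ) / 2 := by
  simp only [spinSources, mem_filter, mem_range, abs_le] at h
  have hint : -(N₀ : ℤ) ≤ (P : ℤ) - N ∧ (P : ℤ) - N ≤ N₀ := by omega
  rw [abs_div, abs_two, div_le_div_iff_of_pos_right two_pos, abs_le]
  exact ⟨by exact_mod_cast hint.1, by exact_mod_cast hint.2⟩

theorem card_spinSources_le (N₀ P : ℕ) : #(spinSources N₀ P) ≤ N₀ + 1 := by
  have hsub : spinSources N₀ P ⊆ (range (N₀ + 1)).image fun k => P + N₀ - 2 * k := by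
    intro N hN
    simp only [spinSources, mem_filter, mem_range, abs_le] at hN
    simp only [mem_image, mem_range]
    exact ⟨(P + N₀ - N) / 2, by omega, by omega⟩
  exact (card_le_card hsub).trans (card_image_le.trans (card_range _).le)

theorem stmt16_general (N₀ : ℕ) (C : ℝ)
    (v : ℕ → ℤ → ℤ → ℂ) (B : ℕ → ℕ → ℤ → ℤ → ℝ)
    (hv : Summable (fun x : ℕ × ℤ × ℤ => ‖v x.1 x.2.1 x.2.2‖ ^ 2))
    (hB : ∀ N : ℕ, ∀ i j : ℤ,
      ∑ P ∈ (Finset.range (N + N₀ + 1)).filter (fun P : ℕ =>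
          |(N : ℤ) - (N₀ : ℤ)| ≤ (P : ℤ) ∧ (P : ℤ) ≤ (N : ℤ) + (N₀ : ℤ) ∧
            (N + P + N₀) % 2 = 0),
        (B N P i j) ^ 2 ≤ C ^ 2) :
    (∑' x : ℕ × ℤ × ℤ,
        ‖∑ N ∈ (Finset.range (x.1 + N₀ + 1)).filter (fun N : ℕ =>
              |(N : ℤ) - (N₀ : ℤ)| ≤ (x.1 : ℤ) ∧ (x.1 : ℤ) ≤ (N : ℤ) + (N₀ : ℤ) ∧
                (N + x.1 + N₀) % 2 = 0),
            v N x.2.1 x.2.2 * (B N x.1 x.2.1 x.2.2 : ℂ) *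
              ((((x.1 : ℝ) - (N : ℝ)) / 2 : ℝ) : ℂ)‖ ^ 2) ≤
      ((N₀ : ℝ) + 1) * ((N₀ : ℝ) / 2) ^ 2 * C ^ 2 *
        ∑' x : ℕ × ℤ × ℤ, ‖v x.1 x.2.1 x.2.2‖ ^ 2 := by
  set K : ℝ := ((N₀ : ℝ) + 1) * ((N₀ : ℝ) / 2) ^ 2
  refine tsum_le_mul_tsum_of_le_sum (spinSources N₀) (spinCouplings N₀)
    (fun _ _ => mem_spinSources_iff_mem_spinCouplings)
    (fun N P a => K * (‖v N a.1 a.2‖ ^ 2 * B N P a.1 a.2 ^ 2)) (fun _ _ _ => by positivity)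
    _ (fun x => ?_) _ (fun _ => by positivity) hv (by positivity) (fun N a => ?_)
  · rw [← mul_sum]
    exact norm_sum_mul_mul_sq_le
      (by exact_mod_cast card_spinSources_le N₀ x.1 : (#(spinSources N₀ x.1) : ℝ) ≤ N₀ + 1) _ _ _
      fun N hN => abs_sub_le_of_mem_spinSources hN
  · calc ∑ P ∈ spinCouplings N₀ N, K * (‖v N a.1 a.2‖ ^ 2 * B N P a.1 a.2 ^ 2)
        = K * ‖v N a.1 a.2‖ ^ 2 * ∑ P ∈ spinCouplings N₀ N, B N P a.1 a.2 ^ 2 := by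
          simp only [mul_sum, mul_assoc]
      _ ≤ K * ‖v N a.1 a.2‖ ^ 2 * C ^ 2 := by gcongr; exact hB N a.1 a.2
      _ = K * C ^ 2 * ‖v N a.1 a.2‖ ^ 2 := by ring

/-- Half-integer indices n, p, n₀ are encoded by their doubles N, P, N₀ : ℕ, and matrix element
labels i, j by elements of ℤ (the relevant families vanish outside the admissible range, so we
index by all of ℕ × ℤ × ℤ).  Let (v N i j) be a square-summable family of complex numbers and
let B N P i j be real coefficients satisfying, for all N, i, j,
∑_{P : |n-n₀| ≤ p ≤ n+n₀, matching parity} (B N P i j)² ≤ C².  Then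
∑_{p,i,j} |∑_{n : |n-n₀| ≤ p ≤ n+n₀} v^n_{ij} B(n₀,n,p;i₀,j₀,i,j)(p-n)|²
  ≤ (2n₀+1)·n₀²·C²·∑_{n,i,j} |v^n_{ij}|²,
where 2n₀+1 = N₀+1, n₀ = N₀/2 and p - n = (P-N)/2. -/
theorem stmt16 (N₀ : ℕ) (i₀ j₀ : ℤ) (C : ℝ) (hC : 0 ≤ C)
    (v : ℕ → ℤ → ℤ → ℂ) (B : ℕ → ℕ → ℤ → ℤ → ℝ)
    (hv : Summable (fun x : ℕ × ℤ × ℤ => ‖v x.1 x.2.1 x.2.2‖ ^ 2))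
    (hB : ∀ N : ℕ, ∀ i j : ℤ,
      ∑ P ∈ (Finset.range (N + N₀ + 1)).filter (fun P : ℕ =>
          |(N : ℤ) - (N₀ : ℤ)| ≤ (P : ℤ) ∧ (P : ℤ) ≤ (N : ℤ) + (N₀ : ℤ) ∧
            (N + P + N₀) % 2 = 0),
        (B N P i j) ^ 2 ≤ C ^ 2) :
    (∑' x : ℕ × ℤ × ℤ,
        ‖∑ N ∈ (Finset.range (x.1 + N₀ + 1)).filter (fun N : ℕ =>
              |(N : ℤ) - (N₀ : ℤ)| ≤ (x.1 : ℤ) ∧ (x.1 : ℤ) ≤ (N : ℤ) + (N₀ : ℤ) ∧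
                (N + x.1 + N₀) % 2 = 0),
            v N x.2.1 x.2.2 * (B N x.1 x.2.1 x.2.2 : ℂ) *
              ((((x.1 : ℝ) - (N : ℝ)) / 2 : ℝ) : ℂ)‖ ^ 2) ≤
      ((N₀ : ℝ) + 1) * ((N₀ : ℝ) / 2) ^ 2 * C ^ 2 *
        ∑' x : ℕ × ℤ × ℤ, ‖v x.1 x.2.1 x.2.2‖ ^ 2 :=
  stmt16_general N₀ C v B hv hB
end
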